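/- arXiv:2111.14499 — 10 statements merged into one kernel-verified Lean document; each statement's English description precedes it below -/
import Mathlib

section
/- For all parameters r, k ∈ ℝ, the one-dimensional Chialvo map f_{r,k}(x) = x²·exp(r − x) + k has negative Schwarzian derivative: for every x ∈ ℝ with x ≠ 0 and x ≠ 2 one has 2·f'''(x)·f'(x) < 3·(f''(x))², i.e. Sf(x) = f'''(x)/f'(x) − (3/2)·(f''(x)/f'(x))² < 0. -/
/-! The derivatives of `x² e^{r-x} + k` are `p(x) e^{r-x}` for quadratics `p`, so
`3 f''² - 2 f''' f' = e^{2(r-x)} q(x)` for a quartic `q`. Substituting `u = x - 2` gives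
`q = u⁴ + 8u + 12 = (u² - 2)² + 4(u + 1)² + 4 > 0`. -/

open Real

noncomputable section

-- At a critical point of `f` the divisions by `deriv f x = 0` make this `0`.
def schwarzian (f : ℝ → ℝ) (x : ℝ) : ℝ :=
  deriv (deriv (deriv f)) x / deriv f x - 3 / 2 * (deriv (deriv f) x / deriv f x) ^ 2

theorem schwarzian_neg {f : ℝ → ℝ} {x : ℝ} (hf : deriv f x ≠ 0)
    (h : 2 * deriv (deriv (deriv f)) x * deriv f x < 3 * deriv (deriv f) x ^ 2) :
    schwarzian f x < 0 := by
  have hden : 0 < 2 * deriv f x ^ 2 := by positivity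
  have heq : schwarzian f x =
      (2 * deriv (deriv (deriv f)) x * deriv f x - 3 * deriv (deriv f) x ^ 2) /
        (2 * deriv f x ^ 2) := by
    unfold schwarzian
    field_simp
  rw [heq]
  exact div_neg_of_neg_of_pos (by linarith) hden

theorem hasDerivAt_mul_exp_sub {g : ℝ → ℝ} {g' y : ℝ} (hg : HasDerivAt g g' y) (r : ℝ) :
    HasDerivAt (fun y => g y * exp (r - y)) ((g' - g y) * exp (r - y)) y := by
  have hexp : HasDerivAt (fun y => exp (r - y)) (exp (r - y) * (-1)) y :=
    ((hasDerivAt_id y).const_sub r).exp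
  rw [show (g' - g y) * exp (r - y) = g' * exp (r - y) + g y * (exp (r - y) * -1) by ring]
  exact hg.mul hexp

def chialvo (r k : ℝ) (y : ℝ) : ℝ := y ^ 2 * exp (r - y) + k

theorem deriv_chialvo (r k : ℝ) :
    deriv (chialvo r k) = fun y => (2 * y - y ^ 2) * exp (r - y) := by
  ext y
  refine ((hasDerivAt_mul_exp_sub (hasDerivAt_pow 2 y) r).add_const k).deriv.trans ?_
  norm_num

theorem deriv_deriv_chialvo (r k : ℝ) :
    deriv (deriv (chialvo r k)) = fun y => (2 - 4 * y + y ^ 2) * exp (r - y) := by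
  ext y
  rw [deriv_chialvo]
  have hg := ((hasDerivAt_id' y).const_mul 2).sub (hasDerivAt_pow 2 y)
  refine (hasDerivAt_mul_exp_sub hg r).deriv.trans ?_
  norm_num
  ring

theorem deriv_deriv_deriv_chialvo (r k : ℝ) :
    deriv (deriv (deriv (chialvo r k))) = fun y => (-6 + 6 * y - y ^ 2) * exp (r - y) := by
  ext y
  rw [deriv_deriv_chialvo]
  have hg := (((hasDerivAt_id' y).const_mul 4).const_sub 2).add (hasDerivAt_pow 2 y)
  refine (hasDerivAt_mul_exp_sub hg r).deriv.trans ?_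
  norm_num
  ring

theorem deriv_chialvo_ne_zero (r k : ℝ) {x : ℝ} (hx0 : x ≠ 0) (hx2 : x ≠ 2) :
    deriv (chialvo r k) x ≠ 0 := by
  rw [deriv_chialvo]
  beta_reduce
  rw [show 2 * x - x ^ 2 = x * (2 - x) by ring]
  exact mul_ne_zero (mul_ne_zero hx0 (sub_ne_zero.mpr hx2.symm)) (exp_pos _).ne'

theorem chialvo_schwarzian_numerator_eq (r k x : ℝ) :
    3 * deriv (deriv (chialvo r k)) x ^ 2 -
        2 * deriv (deriv (deriv (chialvo r k))) x * deriv (chialvo r k) x =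
      exp (r - x) ^ 2 * (((x - 2) ^ 2 - 2) ^ 2 + 4 * (x - 1) ^ 2 + 4) := by
  rw [deriv_deriv_deriv_chialvo, deriv_deriv_chialvo, deriv_chialvo]
  ring

end

/-- The 1D Chialvo map `f_{r,k}(x) = x² exp(r − x) + k` has negative Schwarzian
derivative at every non-critical point `x ≠ 0`, `x ≠ 2`:
`2 f'''(x) f'(x) < 3 (f''(x))²`, i.e. `Sf(x) = f'''/f' − (3/2)(f''/f')² < 0`. -/
theorem chialvo_negative_schwarzian (r k x : ℝ) (hx0 : x ≠ 0) (hx2 : x ≠ 2) :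
    2 * deriv (deriv (deriv (fun y : ℝ => y ^ 2 * Real.exp (r - y) + k))) x *
        deriv (fun y : ℝ => y ^ 2 * Real.exp (r - y) + k) x <
      3 * (deriv (deriv (fun y : ℝ => y ^ 2 * Real.exp (r - y) + k)) x) ^ 2 ∧
    deriv (deriv (deriv (fun y : ℝ => y ^ 2 * Real.exp (r - y) + k))) x /
          deriv (fun y : ℝ => y ^ 2 * Real.exp (r - y) + k) x -
        (3 / 2) * (deriv (deriv (fun y : ℝ => y ^ 2 * Real.exp (r - y) + k)) x /
          deriv (fun y : ℝ => y ^ 2 * Real.exp (r - y) + k) x) ^ 2 < 0 := by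
  change 2 * deriv (deriv (deriv (chialvo r k))) x * deriv (chialvo r k) x <
      3 * deriv (deriv (chialvo r k)) x ^ 2 ∧ schwarzian (chialvo r k) x < 0
  have hnum : 2 * deriv (deriv (deriv (chialvo r k))) x * deriv (chialvo r k) x <
      3 * deriv (deriv (chialvo r k)) x ^ 2 :=
    sub_pos.mp (by rw [chialvo_schwarzian_numerator_eq]; positivity)
  exact ⟨hnum, schwarzian_neg (deriv_chialvo_ne_zero r k hx0 hx2) hnum⟩
end

section
/- Fix k ≥ 0. The equation (x − k)(x − 2) = x has exactly two real roots, x = (k + 3 − √(k² − 2k + 9))/2 and x = (k + 3 + √(k² − 2k + 9))/2, and among them only x = (k + 3 + √(k² − 2k + 9))/2 satisfies x > k (and it also satisfies x > 2). Consequently, if x₀ is a fixed point of the Chialvo map f_{r,k}(x) = x²·exp(r − x) + k with multiplier f'_{r,k}(x₀) = −1, then x₀ = (k + 3 + √(k² − 2k + 9))/2. -/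
/-!
Eliminating `exp (r - x)` between the fixed-point equation `x² e^{r-x} + k = x` and the
multiplier equation `x (2 - x) e^{r-x} = -1` leaves the quadratic `(x - k)(x - 2) = x`, whose
roots are `(k + 3 ± √(k² - 2k + 9))/2`. Since `k² - 2k + 9 = (k - 3)² + 4k`, for `k ≥ 0` the
smaller root is at most `k`. A fixed point, however, satisfies `x - k = x² e^{r-x} > 0`, so it
is the larger root.
-/

open Real

namespace Chialvo

noncomputable def flipRootMinus (k : ℝ) : ℝ := (k + 3 - √(k ^ 2 - 2 * k + 9)) / 2

noncomputable def flipRootPlus (k : ℝ) : ℝ := (k + 3 + √(k ^ 2 - 2 * k + 9)) / 2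

variable (k : ℝ)

lemma flip_discr_pos : 0 < k ^ 2 - 2 * k + 9 := by nlinarith [sq_nonneg (k - 1)]

lemma sq_sqrt_flip_discr : √(k ^ 2 - 2 * k + 9) ^ 2 = k ^ 2 - 2 * k + 9 :=
  sq_sqrt (flip_discr_pos k).le

lemma sub_mul_sub_eq_self_iff (x : ℝ) :
    (x - k) * (x - 2) = x ↔ x = flipRootMinus k ∨ x = flipRootPlus k := by
  have hdiscr : discrim 1 (-(k + 3)) (2 * k) =
      √(k ^ 2 - 2 * k + 9) * √(k ^ 2 - 2 * k + 9) := by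
    rw [← sq, sq_sqrt_flip_discr, discrim]
    ring
  have hroots := quadratic_eq_zero_iff one_ne_zero hdiscr x
  simp only [neg_neg, mul_one] at hroots
  rw [or_comm, flipRootPlus, flipRootMinus, ← hroots]
  constructor <;> intro h <;> linarith

lemma flipRootMinus_lt_flipRootPlus : flipRootMinus k < flipRootPlus k := by
  have := sqrt_pos.2 (flip_discr_pos k)
  rw [flipRootMinus, flipRootPlus]
  linarith

lemma flipRootMinus_le (hk : 0 ≤ k) : flipRootMinus k ≤ k := by
  have : 3 - k ≤ √(k ^ 2 - 2 * k + 9) := le_sqrt_of_sq_le (by nlinarith)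
  rw [flipRootMinus]
  linarith

lemma lt_flipRootPlus : k < flipRootPlus k := by
  have : k - 3 < √(k ^ 2 - 2 * k + 9) := by
    rcases lt_or_ge k 3 with hk | hk
    · linarith [sqrt_nonneg (k ^ 2 - 2 * k + 9)]
    · exact lt_sqrt_of_sq_lt (by nlinarith)
  rw [flipRootPlus]
  linarith

lemma two_lt_flipRootPlus : 2 < flipRootPlus k := by
  have : 1 - k < √(k ^ 2 - 2 * k + 9) := lt_sqrt_of_sq_lt (by nlinarith)
  rw [flipRootPlus]
  linarith

variable {k}

lemma sub_mul_sub_eq_self_of_flip {r x : ℝ} (hfix : x ^ 2 * exp (r - x) + k = x)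
    (hmul : x * (2 - x) * exp (r - x) = -1) : (x - k) * (x - 2) = x := by
  linear_combination (2 - x) * hfix - x * hmul

lemma lt_of_flip {r x : ℝ} (hfix : x ^ 2 * exp (r - x) + k = x)
    (hmul : x * (2 - x) * exp (r - x) = -1) : k < x := by
  have hx : x ≠ 0 := by
    rintro rfl
    simp at hmul
  have : 0 < x ^ 2 * exp (r - x) := by positivity
  linarith

lemma eq_flipRootPlus_of_flip (hk : 0 ≤ k) {r x : ℝ} (hfix : x ^ 2 * exp (r - x) + k = x)
    (hmul : x * (2 - x) * exp (r - x) = -1) : x = flipRootPlus k := by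
  refine ((sub_mul_sub_eq_self_iff k x).1 (sub_mul_sub_eq_self_of_flip hfix hmul)).resolve_left ?_
  rintro rfl
  exact (lt_of_flip hfix hmul).not_ge (flipRootMinus_le k hk)

end Chialvo

open Chialvo in
/-- For fixed `k ≥ 0`, the equation `(x − k)(x − 2) = x` has exactly the two real
roots `(k + 3 ± √(k² − 2k + 9))/2`; they are distinct, and only the larger one
exceeds `k` (and it also exceeds `2`). Consequently, any fixed point of the Chialvo
map `f_{r,k}(x) = x² exp(r − x) + k` with multiplier `−1` equals the larger root. -/
theorem chialvo_flip_fixed_point_candidate (k : ℝ) (hk : 0 ≤ k) :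
    (∀ x : ℝ, (x - k) * (x - 2) = x ↔
      x = (k + 3 - Real.sqrt (k ^ 2 - 2 * k + 9)) / 2 ∨
      x = (k + 3 + Real.sqrt (k ^ 2 - 2 * k + 9)) / 2) ∧
    (k + 3 - Real.sqrt (k ^ 2 - 2 * k + 9)) / 2 ≠
      (k + 3 + Real.sqrt (k ^ 2 - 2 * k + 9)) / 2 ∧
    ¬ k < (k + 3 - Real.sqrt (k ^ 2 - 2 * k + 9)) / 2 ∧
    k < (k + 3 + Real.sqrt (k ^ 2 - 2 * k + 9)) / 2 ∧
    2 < (k + 3 + Real.sqrt (k ^ 2 - 2 * k + 9)) / 2 ∧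
    (∀ r x₀ : ℝ, x₀ ^ 2 * Real.exp (r - x₀) + k = x₀ →
      x₀ * (2 - x₀) * Real.exp (r - x₀) = -1 →
      x₀ = (k + 3 + Real.sqrt (k ^ 2 - 2 * k + 9)) / 2) :=
  ⟨sub_mul_sub_eq_self_iff k,
    (flipRootMinus_lt_flipRootPlus k).ne,
    (flipRootMinus_le k hk).not_gt,
    lt_flipRootPlus k,
    two_lt_flipRootPlus k,
    fun _ _ hfix hmul => eq_flipRootPlus_of_flip hk hfix hmul⟩
end

section
/- For k = 0 and r₀ = 1, the one-dimensional Chialvo map undergoes a fold bifurcation at the fixed point x₀ = 1; explicitly, with f(x, r) = x²·exp(r − x): f(1, 1) = 1; ∂f/∂x(1, 1) = 1; ∂²f/∂x²(1, 1) = −1 ≠ 0; and ∂f/∂r(1, 1) = 1 ≠ 0. Moreover (x₀, r₀) = (1, 1) is the only pair satisfying simultaneously the fixed-point condition x²·exp(r − x) = x with x > 0 and the multiplier condition x(2 − x)·exp(r − x) = 1. -/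
/-!
The derivatives of `x ↦ x² e^{a - x}` are `(2x - x²) e^{a - x}` and `(x² - 4x + 2) e^{a - x}`,
which at `x = a = 1` give `1` and `-1`. For uniqueness, a positive fixed point satisfies
`x e^{r - x} = 1`; substituting this into the multiplier condition `(2 - x) · x e^{r - x} = 1`
leaves `2 - x = 1`, so `x = 1`, and then `e^{r - 1} = 1` forces `r = 1`.
-/

open Real

lemma hasDerivAt_sq_mul_exp_sub (a x : ℝ) :
    HasDerivAt (fun x : ℝ => x ^ 2 * exp (a - x)) ((2 * x - x ^ 2) * exp (a - x)) x :=
  ((hasDerivAt_pow 2 x).fun_mul ((hasDerivAt_id' x).const_sub a).exp).congr_deriv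
    (by push_cast; ring)

lemma deriv_sq_mul_exp_sub (a : ℝ) :
    deriv (fun x : ℝ => x ^ 2 * exp (a - x)) = fun x => (2 * x - x ^ 2) * exp (a - x) :=
  funext fun x => (hasDerivAt_sq_mul_exp_sub a x).deriv

lemma hasDerivAt_two_mul_sub_sq_mul_exp_sub (a x : ℝ) :
    HasDerivAt (fun x : ℝ => (2 * x - x ^ 2) * exp (a - x))
      ((x ^ 2 - 4 * x + 2) * exp (a - x)) x :=
  ((((hasDerivAt_id' x).const_mul 2).fun_sub (hasDerivAt_pow 2 x)).fun_mul
    ((hasDerivAt_id' x).const_sub a).exp).congr_deriv (by push_cast; ring)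

lemma mul_exp_sub_eq_one_of_sq_mul_exp_sub_eq_self {x r : ℝ} (hx : 0 < x)
    (hfix : x ^ 2 * exp (r - x) = x) : x * exp (r - x) = 1 := by
  refine mul_left_cancel₀ hx.ne' ?_
  rw [mul_one, ← mul_assoc, ← sq, hfix]

lemma eq_one_of_fixedPoint_of_multiplier_eq_one {x r : ℝ} (hx : 0 < x)
    (hfix : x ^ 2 * exp (r - x) = x) (hmul : x * (2 - x) * exp (r - x) = 1) :
    x = 1 ∧ r = 1 := by
  have hkey := mul_exp_sub_eq_one_of_sq_mul_exp_sub_eq_self hx hfix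
  have hx1 : x = 1 := by
    have h : (2 - x) * (x * exp (r - x)) = 1 := by rw [← hmul]; ring
    rw [hkey, mul_one] at h
    linarith
  subst hx1
  have hexp : exp (r - 1) = 1 := by simpa using hkey
  exact ⟨rfl, by linarith [exp_eq_one_iff _ |>.mp hexp]⟩

/-- Fold bifurcation of the 1D Chialvo map for `k = 0` at `(x₀, r₀) = (1, 1)`:
with `f(x, r) = x² exp(r − x)` one has `f(1,1) = 1`, `∂f/∂x(1,1) = 1`,
`∂²f/∂x²(1,1) = −1 ≠ 0`, `∂f/∂r(1,1) = 1 ≠ 0`, and `(1,1)` is the only pair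
satisfying the fixed-point condition (with `x > 0`) and the multiplier condition. -/
theorem chialvo_fold_bifurcation_k_zero :
    (1 : ℝ) ^ 2 * Real.exp (1 - 1) = 1 ∧
    deriv (fun x : ℝ => x ^ 2 * Real.exp (1 - x)) 1 = 1 ∧
    deriv (deriv (fun x : ℝ => x ^ 2 * Real.exp (1 - x))) 1 = -1 ∧
    deriv (deriv (fun x : ℝ => x ^ 2 * Real.exp (1 - x))) 1 ≠ 0 ∧
    deriv (fun r : ℝ => (1 : ℝ) ^ 2 * Real.exp (r - 1)) 1 = 1 ∧
    deriv (fun r : ℝ => (1 : ℝ) ^ 2 * Real.exp (r - 1)) 1 ≠ 0 ∧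
    (∀ x r : ℝ, 0 < x → x ^ 2 * Real.exp (r - x) = x →
      x * (2 - x) * Real.exp (r - x) = 1 → x = 1 ∧ r = 1) := by
  have hdx : deriv (fun x : ℝ => x ^ 2 * exp (1 - x)) 1 = 1 := by
    rw [(hasDerivAt_sq_mul_exp_sub 1 1).deriv]
    norm_num
  have hdxx : deriv (deriv (fun x : ℝ => x ^ 2 * exp (1 - x))) 1 = -1 := by
    rw [deriv_sq_mul_exp_sub, (hasDerivAt_two_mul_sub_sq_mul_exp_sub 1 1).deriv]
    norm_num
  have hdr : deriv (fun r : ℝ => (1 : ℝ) ^ 2 * exp (r - 1)) 1 = 1 := by simp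
  refine ⟨by simp, hdx, hdxx, by norm_num [hdxx], hdr, by norm_num [hdr],
    fun _ _ => eq_one_of_fixedPoint_of_multiplier_eq_one⟩
end

section
/- Let k > 0 and suppose x₀ is a fixed point of the Chialvo map f_{r,k}(x) = x²·exp(r − x) + k with multiplier 1, i.e. x₀²·exp(r − x₀) + k = x₀ and x₀(2 − x₀)·exp(r − x₀) = 1. Then k < x₀ < 2, x₀ satisfies the quadratic equation x₀² − (k + 1)x₀ + 2k = 0, and necessarily k ≤ 3 − 2√2. -/
/-!
Writing `E = exp (r - x₀) > 0`, the multiplier condition `x₀ (2 - x₀) E = 1` forces `0 < x₀ < 2`,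
and the fixed-point condition `x₀² E = x₀ - k` gives `k < x₀`. Eliminating `E` between the two
conditions leaves the quadratic `x₀² - (k + 1) x₀ + 2k = 0`, whose discriminant `k² - 6k + 1`
must be nonnegative; together with `k < 2` this gives `k ≤ 3 - 2√2`.
-/

open Real

namespace Chialvo

theorem pos_and_lt_two_of_mul_two_sub_pos {x : ℝ} (h : 0 < x * (2 - x)) : 0 < x ∧ x < 2 := by
  rcases mul_pos_iff.mp h with ⟨hx, hx2⟩ | ⟨hx, hx2⟩
  · exact ⟨hx, by linarith⟩
  · linarith

theorem fold_quadratic_eq_zero {x k E : ℝ} (hfix : x ^ 2 * E + k = x)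
    (hmult : x * (2 - x) * E = 1) : x ^ 2 - (k + 1) * x + 2 * k = 0 := by
  linear_combination (2 - x) * hfix - x * hmult

theorem le_three_sub_two_mul_sqrt_two_of_quadratic {x k : ℝ}
    (hquad : x ^ 2 - (k + 1) * x + 2 * k = 0) (hk : k < 3) : k ≤ 3 - 2 * √2 := by
  have hdisc : (2 * √2) ^ 2 ≤ (3 - k) ^ 2 := by
    nlinarith [sq_nonneg (2 * x - (k + 1)), sq_sqrt (zero_le_two : (0 : ℝ) ≤ 2)]
  have := (pow_le_pow_iff_left₀ (by positivity) (by linarith) two_ne_zero).mp hdisc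
  linarith

end Chialvo

theorem chialvo_fold_necessary_conditions_general (k r x₀ : ℝ)
    (hfix : x₀ ^ 2 * Real.exp (r - x₀) + k = x₀)
    (hmult : x₀ * (2 - x₀) * Real.exp (r - x₀) = 1) :
    k < x₀ ∧ x₀ < 2 ∧ x₀ ^ 2 - (k + 1) * x₀ + 2 * k = 0 ∧ k ≤ 3 - 2 * Real.sqrt 2 := by
  have hE := exp_pos (r - x₀)
  obtain ⟨hx₀, hx₀2⟩ : 0 < x₀ ∧ x₀ < 2 :=
    Chialvo.pos_and_lt_two_of_mul_two_sub_pos (pos_of_mul_pos_left (hmult ▸ one_pos) hE.le)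
  have hkx : k < x₀ := by linarith [mul_pos (pow_pos hx₀ 2) hE]
  have hquad := Chialvo.fold_quadratic_eq_zero hfix hmult
  exact ⟨hkx, hx₀2, hquad,
    Chialvo.le_three_sub_two_mul_sqrt_two_of_quadratic hquad (by linarith)⟩

/-- Necessary conditions for a fold bifurcation in the 1D Chialvo map with `k > 0`:
if `x₀` is a fixed point of `f_{r,k}(x) = x² exp(r − x) + k` with multiplier `1`,
then `k < x₀ < 2`, `x₀² − (k + 1)x₀ + 2k = 0`, and necessarily `k ≤ 3 − 2√2`. -/
theorem chialvo_fold_necessary_conditions (k r x₀ : ℝ) (hk : 0 < k)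
    (hfix : x₀ ^ 2 * Real.exp (r - x₀) + k = x₀)
    (hmult : x₀ * (2 - x₀) * Real.exp (r - x₀) = 1) :
    k < x₀ ∧ x₀ < 2 ∧ x₀ ^ 2 - (k + 1) * x₀ + 2 * k = 0 ∧ k ≤ 3 - 2 * Real.sqrt 2 :=
  chialvo_fold_necessary_conditions_general k r x₀ hfix hmult
end

section
/- Fix r > 2 − √2 − ln(2√2 − 2). Then the multiplier equation (2x − x²)·exp(r − x) = 1 has a unique solution x(r) in the open interval (0, 2 − √2). Moreover, setting k* = x(r) − x(r)/(2 − x(r)), the point x(r) is a fixed point of the Chialvo map f_{r,k*}(x) = x²·exp(r − x) + k* with multiplier 1, and the fold nondegeneracy conditions with respect to the parameter k hold: ∂²f/∂x² at (x(r), k*) equals exp(r − x(r))·((x(r) − 2)² − 2) ≠ 0, and ∂f/∂k = 1 ≠ 0. Hence x(r) undergoes a fold bifurcation with respect to k at the bifurcation value k*. -/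
/-!
The multiplier `g(x) = (2x - x²) e^{r-x}` is the derivative of `x ↦ x² e^{r-x} + k`, and its
own derivative is `((x - 2)² - 2) e^{r-x}`, positive for `x < 2 - √2`. Hence `g` increases
strictly on `[0, 2 - √2]`, from `g 0 = 0` to `g (2 - √2) = (2√2 - 2) e^{r-2+√2}`, which
exceeds `1` exactly when `r > 2 - √2 - log (2√2 - 2)`; the intermediate value theorem gives the
unique solution of `g x = 1`. That equation reads `x e^{r-x} = 1 / (2 - x)`, so
`x² e^{r-x} = x / (2 - x)`, which is the fixed-point equation at `k* = x - x / (2 - x)`.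
The second derivative of the map is `g'`, positive at `x(r)`.
-/

open Real Set

namespace Chialvo

lemma hasDerivAt_exp_const_sub (r x : ℝ) :
    HasDerivAt (fun t => exp (r - t)) (-exp (r - x)) x := by
  simpa using ((hasDerivAt_id x).const_sub r).exp

lemma hasDerivAt_map (r k x : ℝ) :
    HasDerivAt (fun t => t ^ 2 * exp (r - t) + k) ((2 * x - x ^ 2) * exp (r - x)) x :=
  (((hasDerivAt_pow 2 x).mul (hasDerivAt_exp_const_sub r x)).add_const k).congr_deriv
    (by ring)

lemma hasDerivAt_multiplier (r x : ℝ) :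
    HasDerivAt (fun t => (2 * t - t ^ 2) * exp (r - t)) (((x - 2) ^ 2 - 2) * exp (r - x)) x :=
  ((((hasDerivAt_id x).const_mul 2).sub (hasDerivAt_pow 2 x)).mul
    (hasDerivAt_exp_const_sub r x)).congr_deriv (by simp only [id_eq, Pi.sub_apply]; ring)

lemma deriv_deriv_map (r k x : ℝ) :
    deriv (deriv fun t => t ^ 2 * exp (r - t) + k) x = exp (r - x) * ((x - 2) ^ 2 - 2) := by
  have hderiv : deriv (fun t => t ^ 2 * exp (r - t) + k) = fun t => (2 * t - t ^ 2) * exp (r - t) :=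
    funext fun t => (hasDerivAt_map r k t).deriv
  rw [hderiv, (hasDerivAt_multiplier r x).deriv, mul_comm]

lemma two_lt_sq_sub_two {x : ℝ} (hx : x < 2 - √2) : 2 < (x - 2) ^ 2 := by
  rw [← neg_sub, neg_sq]
  exact lt_sq_of_sqrt_lt (by linarith)

lemma strictMonoOn_multiplier (r : ℝ) :
    StrictMonoOn (fun t => (2 * t - t ^ 2) * exp (r - t)) (Iic (2 - √2)) := by
  refine strictMonoOn_of_deriv_pos (convex_Iic _) (by fun_prop) fun x hx => ?_
  rw [interior_Iic] at hx
  rw [(hasDerivAt_multiplier r x).deriv]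
  exact mul_pos (by linarith [two_lt_sq_sub_two hx]) (exp_pos _)

lemma one_lt_multiplier_two_sub_sqrt_two {r : ℝ} (hr : 2 - √2 - log (2 * √2 - 2) < r) :
    1 < (2 * (2 - √2) - (2 - √2) ^ 2) * exp (r - (2 - √2)) := by
  have hpos : 0 < 2 * √2 - 2 := by linarith [one_lt_sqrt_two]
  have hval : 2 * (2 - √2) - (2 - √2) ^ 2 = 2 * √2 - 2 := by
    linear_combination (-1 : ℝ) * sq_sqrt (zero_le_two : (0 : ℝ) ≤ 2)
  rw [hval, ← exp_log hpos, ← exp_add]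
  exact one_lt_exp_iff.mpr (by linarith)

theorem existsUnique_multiplier_eq_one {r : ℝ} (hr : 2 - √2 - log (2 * √2 - 2) < r) :
    ∃! x : ℝ, x ∈ Ioo 0 (2 - √2) ∧ (2 * x - x ^ 2) * exp (r - x) = 1 := by
  have hb : 0 ≤ 2 - √2 := by linarith [sqrt_two_lt_three_halves]
  obtain ⟨x, hx, hgx⟩ := intermediate_value_Ioo hb
    (by fun_prop : ContinuousOn (fun t => (2 * t - t ^ 2) * exp (r - t)) (Icc 0 (2 - √2)))
    ⟨by simp, one_lt_multiplier_two_sub_sqrt_two hr⟩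
  exact ⟨x, ⟨hx, hgx⟩, fun y ⟨hy, hgy⟩ =>
    (strictMonoOn_multiplier r).injOn hy.2.le hx.2.le (hgy.trans hgx.symm)⟩

lemma map_fold_value_eq_self {r x : ℝ} (h : (2 * x - x ^ 2) * exp (r - x) = 1) :
    x ^ 2 * exp (r - x) + (x - x / (2 - x)) = x := by
  have hx : 2 - x ≠ 0 := fun h0 => by
    rw [show 2 * x - x ^ 2 = x * (2 - x) by ring, h0] at h
    simp at h
  field_simp
  linear_combination x * h

end Chialvo

open Chialvo in
/-- Fold bifurcation with respect to `k` in the 1D Chialvo map. For fixed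
`r > 2 − √2 − ln(2√2 − 2)`, the multiplier equation `(2x − x²) exp(r − x) = 1`
has a unique solution `x(r)` in `(0, 2 − √2)`; moreover, with
`k* = x(r) − x(r)/(2 − x(r))`, the point `x(r)` is a fixed point of
`f(x, k) = x² exp(r − x) + k` at `k = k*` (with multiplier `1`), the second
derivative `∂²f/∂x²` at `(x(r), k*)` equals `exp(r − x(r))((x(r) − 2)² − 2) ≠ 0`,
and `∂f/∂k = 1 ≠ 0`. -/
theorem chialvo_fold_bifurcation_in_k (r : ℝ)
    (hr : 2 - Real.sqrt 2 - Real.log (2 * Real.sqrt 2 - 2) < r) :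
    (∃! x : ℝ, x ∈ Set.Ioo 0 (2 - Real.sqrt 2) ∧
      (2 * x - x ^ 2) * Real.exp (r - x) = 1) ∧
    (∀ x : ℝ, x ∈ Set.Ioo 0 (2 - Real.sqrt 2) →
      (2 * x - x ^ 2) * Real.exp (r - x) = 1 →
      x ^ 2 * Real.exp (r - x) + (x - x / (2 - x)) = x ∧
      deriv (deriv (fun t : ℝ => t ^ 2 * Real.exp (r - t) + (x - x / (2 - x)))) x =
        Real.exp (r - x) * ((x - 2) ^ 2 - 2) ∧
      Real.exp (r - x) * ((x - 2) ^ 2 - 2) ≠ 0 ∧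
      deriv (fun k : ℝ => x ^ 2 * Real.exp (r - x) + k) (x - x / (2 - x)) = 1 ∧
      (1 : ℝ) ≠ 0) := by
  refine ⟨existsUnique_multiplier_eq_one hr, fun x hx hmult =>
    ⟨map_fold_value_eq_self hmult, deriv_deriv_map r _ x, ?_, ?_, one_ne_zero⟩⟩
  · exact (mul_pos (exp_pos _) (by linarith [two_lt_sq_sub_two hx.2])).ne'
  · exact ((hasDerivAt_id _).const_add _).deriv
end

section
/- For every k with 0 ≤ k < 2 there exists r* = r*(k) ∈ ℝ such that for all r ≥ r* the one-dimensional Chialvo map f_{r,k} satisfies f_{r,k}(f_{r,k}(2)) < 2 < f_{r,k}(2), i.e. the second iterate of the critical point c = 2 lies strictly to the left of c and the first iterate strictly to the right. -/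
/-!
As `r → ∞`, the first iterate `f(2) = 4 e^{r-2} + k` tends to `∞`, while
`f(f(2)) - k = f(2)² e^{r - f(2)} = (f(2)² e^{-f(2)/2}) · e^{-(f(2)/2 - r)}` tends to `0`:
the first factor because exponential decay beats polynomial growth, the second because
`f(2)/2 - r = 2 e^{r-2} - r + k/2 ≥ r - 2 + k/2` by `e^t ≥ t + 1`. Hence `f(f(2)) → k < 2 < f(2)` for large `r`.
-/

open Real Filter Topology

noncomputable def chialvoMap (r k x : ℝ) : ℝ := x ^ 2 * exp (r - x) + k

lemma chialvoMap_two (r k : ℝ) : chialvoMap r k 2 = 4 * exp (r - 2) + k := by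
  norm_num [chialvoMap]

lemma tendsto_sq_mul_exp_sub_of_half_sub_tendsto {α : Type*} {l : Filter α} {y r : α → ℝ}
    (hy : Tendsto y l atTop) (hgap : Tendsto (fun a => y a / 2 - r a) l atTop) :
    Tendsto (fun a => y a ^ 2 * exp (r a - y a)) l (𝓝 0) := by
  have hpoly : Tendsto (fun a => 4 * ((y a / 2) ^ 2 * exp (-(y a / 2)))) l (𝓝 0) := by
    simpa using ((tendsto_pow_mul_exp_neg_atTop_nhds_zero 2).comp
      (hy.atTop_div_const two_pos)).const_mul 4
  have hexp : Tendsto (fun a => exp (-(y a / 2 - r a))) l (𝓝 0) :=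
    tendsto_exp_neg_atTop_nhds_zero.comp hgap
  refine (zero_mul (0 : ℝ) ▸ hpoly.mul hexp).congr fun a => ?_
  rw [show r a - y a = -(y a / 2) + -(y a / 2 - r a) by ring, exp_add]
  ring

lemma tendsto_chialvoMap_two_atTop (k : ℝ) :
    Tendsto (fun r => chialvoMap r k 2) atTop atTop := by
  simp only [chialvoMap_two]
  exact tendsto_atTop_add_const_right _ k <|
    (tendsto_exp_atTop.comp (tendsto_atTop_add_const_right _ (-2) tendsto_id)).const_mul_atTop
      four_pos

lemma tendsto_chialvoMap_two_half_sub_atTop (k : ℝ) :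
    Tendsto (fun r => chialvoMap r k 2 / 2 - r) atTop atTop := by
  refine tendsto_atTop_mono (fun r => ?_) (tendsto_atTop_add_const_right _ (k / 2 - 2) tendsto_id)
  have := add_one_le_exp (r - 2)
  rw [chialvoMap_two, id]
  linarith

lemma tendsto_chialvoMap_chialvoMap_two (k : ℝ) :
    Tendsto (fun r => chialvoMap r k (chialvoMap r k 2)) atTop (𝓝 k) := by
  have h := (tendsto_sq_mul_exp_sub_of_half_sub_tendsto (tendsto_chialvoMap_two_atTop k)
    (tendsto_chialvoMap_two_half_sub_atTop k)).add_const k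
  rw [zero_add] at h
  exact h

theorem chialvo_dynamical_core_general (k : ℝ) (hk2 : k < 2) :
    ∃ rstar : ℝ, ∀ r : ℝ, rstar ≤ r →
      (fun x : ℝ => x ^ 2 * Real.exp (r - x) + k)
          ((fun x : ℝ => x ^ 2 * Real.exp (r - x) + k) 2) < 2 ∧
      2 < (fun x : ℝ => x ^ 2 * Real.exp (r - x) + k) 2 := by
  have hsecond : ∀ᶠ r in atTop, chialvoMap r k (chialvoMap r k 2) < 2 :=
    (tendsto_chialvoMap_chialvoMap_two k).eventually_lt_const hk2
  have hfirst : ∀ᶠ r in atTop, 2 < chialvoMap r k 2 :=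
    (tendsto_chialvoMap_two_atTop k).eventually_gt_atTop 2
  exact eventually_atTop.1 (hsecond.and hfirst)

/-- Dynamical core condition for the 1D Chialvo map: for every `0 ≤ k < 2` there is
`r*` such that for all `r ≥ r*` the map `f_{r,k}(x) = x² exp(r − x) + k` satisfies
`f_{r,k}(f_{r,k}(2)) < 2 < f_{r,k}(2)`. -/
theorem chialvo_dynamical_core (k : ℝ) (hk0 : 0 ≤ k) (hk2 : k < 2) :
    ∃ rstar : ℝ, ∀ r : ℝ, rstar ≤ r →
      (fun x : ℝ => x ^ 2 * Real.exp (r - x) + k)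
          ((fun x : ℝ => x ^ 2 * Real.exp (r - x) + k) 2) < 2 ∧
      2 < (fun x : ℝ => x ^ 2 * Real.exp (r - x) + k) 2 :=
  chialvo_dynamical_core_general k hk2
end

section
/- Let 0 ≤ k < 2 and let x_f be a fixed point of the one-dimensional Chialvo map f_{r,k}(x) = x²·exp(r − x) + k with x_f > (3 + k + √((k − 1)² + 8))/2. Then |f'_{r,k}(x_f)| > 1; equivalently, (x_f − k)(x_f − 2)/x_f > 1, so the fixed point x_f is unstable (repelling). -/
/-!
At a fixed point `x = x² e^{r-x} + k` the factor `e^{r-x}` in `f'(x) = x(2 - x) e^{r-x}` can be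
eliminated, giving `f'(x) = -(x - k)(x - 2)/x`. The condition `(x - k)(x - 2) > x` is the quadratic
inequality `x² - (3 + k)x + 2k > 0`, whose larger root is `(3 + k + √((k - 1)² + 8))/2`.
-/

open Real

theorem hasDerivAt_chialvo (r k x : ℝ) :
    HasDerivAt (fun x : ℝ => x ^ 2 * exp (r - x) + k) (x * (2 - x) * exp (r - x)) x := by
  have hexp : HasDerivAt (fun x : ℝ => exp (r - x)) (exp (r - x) * (-1)) x :=
    (hasDerivAt_exp (r - x)).comp x ((hasDerivAt_id x).const_sub r)
  have hsq : HasDerivAt (fun x : ℝ => x ^ 2) (2 * x) x := by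
    simpa using hasDerivAt_pow 2 x
  exact ((hsq.mul hexp).add_const k).congr_deriv (by ring)

theorem chialvo_deriv_eq_of_fixed_point {r k x : ℝ} (hx : x ≠ 0)
    (hfix : x ^ 2 * exp (r - x) + k = x) :
    x * (2 - x) * exp (r - x) = -((x - k) * (x - 2) / x) := by
  have hexp : exp (r - x) = (x - k) / x ^ 2 := by
    rw [eq_div_iff (pow_ne_zero 2 hx)]
    linarith
  rw [hexp]
  field_simp
  ring

theorem one_lt_sub_mul_sub_div_of_root_lt {k x : ℝ}
    (h : (3 + k + √((k - 1) ^ 2 + 8)) / 2 < x) :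
    1 < (x - k) * (x - 2) / x := by
  set s := √((k - 1) ^ 2 + 8)
  have hs0 : 0 ≤ s := sqrt_nonneg _
  have hs_sq : s ^ 2 = (k - 1) ^ 2 + 8 := sq_sqrt (by positivity)
  have hx_pos : 0 < x := by nlinarith
  have hquad : x < (x - k) * (x - 2) := by nlinarith
  rwa [one_lt_div hx_pos]

theorem chialvo_fixed_point_unstable_general (k r xf : ℝ)
    (hfix : xf ^ 2 * Real.exp (r - xf) + k = xf)
    (hgt : (3 + k + Real.sqrt ((k - 1) ^ 2 + 8)) / 2 < xf) :
    1 < |deriv (fun x : ℝ => x ^ 2 * Real.exp (r - x) + k) xf| ∧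
    1 < (xf - k) * (xf - 2) / xf := by
  have hunstable := one_lt_sub_mul_sub_div_of_root_lt hgt
  have hxf : xf ≠ 0 := by
    rintro rfl
    norm_num at hunstable
  refine ⟨?_, hunstable⟩
  rw [(hasDerivAt_chialvo r k xf).deriv, chialvo_deriv_eq_of_fixed_point hxf hfix, abs_neg]
  exact hunstable.trans_le (le_abs_self _)

/-- Instability criterion for fixed points of the 1D Chialvo map: if `0 ≤ k < 2`
and `x_f` is a fixed point of `f_{r,k}(x) = x² exp(r − x) + k` with
`x_f > (3 + k + √((k − 1)² + 8))/2`, then `|f'_{r,k}(x_f)| > 1`; equivalently,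
`(x_f − k)(x_f − 2)/x_f > 1`, so `x_f` is unstable (repelling). -/
theorem chialvo_fixed_point_unstable (k r xf : ℝ) (hk0 : 0 ≤ k) (hk2 : k < 2)
    (hfix : xf ^ 2 * Real.exp (r - xf) + k = xf)
    (hgt : (3 + k + Real.sqrt ((k - 1) ^ 2 + 8)) / 2 < xf) :
    1 < |deriv (fun x : ℝ => x ^ 2 * Real.exp (r - x) + k) xf| ∧
    1 < (xf - k) * (xf - 2) / xf :=
  chialvo_fixed_point_unstable_general k r xf hfix hgt
end

section
/- Fix 0 ≤ k < 2 and let r₁ < r₂. If x₁ > 2 is a fixed point of the Chialvo map f_{r₁,k} and x₂ > 2 is a fixed point of f_{r₂,k}, then x₁ < x₂; i.e., the fixed point located to the right of the critical point c = 2 moves strictly to the right as r increases. Equivalently: the function x ↦ (1/x − k/x²)·exp(x) is strictly increasing on (2, ∞), and a point x > 2 is a fixed point of f_{r,k} exactly when exp(r) = (1/x − k/x²)·exp(x). -/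
/-!
With `g x = (1/x - k/x²) eˣ`, the fixed-point equation of `f_{r,k}` at `x ≠ 0` reads `eʳ = g x`.
Since `g' x = ((x - 2)(x - k) + x) eˣ / x³`, which is positive for `x > 2 ≥ k`, the function `g` is
strictly increasing on `(2, ∞)`, so a larger `eʳ` forces a larger fixed point there.
-/

open Real Set

lemma hasDerivAt_inv_sub_div_sq_mul_exp (k : ℝ) {x : ℝ} (hx : x ≠ 0) :
    HasDerivAt (fun x : ℝ => (1 / x - k / x ^ 2) * exp x)
      (((x - 2) * (x - k) + x) / x ^ 3 * exp x) x := by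
  have h : HasDerivAt (fun y : ℝ => (y⁻¹ - k * (y ^ 2)⁻¹) * exp y) _ x :=
    ((hasDerivAt_inv hx).sub
      (((hasDerivAt_pow 2 x).inv (pow_ne_zero 2 hx)).const_mul k)).mul (hasDerivAt_exp x)
  convert h using 1
  · simp only [div_eq_mul_inv, one_mul]
  · simp only [Pi.sub_apply, Pi.inv_apply, Nat.cast_ofNat]
    field_simp
    ring

lemma strictMonoOn_inv_sub_div_sq_mul_exp {k : ℝ} (hk : k ≤ 2) :
    StrictMonoOn (fun x : ℝ => (1 / x - k / x ^ 2) * exp x) (Ioi 2) := by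
  have hderiv : ∀ x ∈ Ioi (2 : ℝ), HasDerivAt (fun x : ℝ => (1 / x - k / x ^ 2) * exp x)
      (((x - 2) * (x - k) + x) / x ^ 3 * exp x) x := fun x hx =>
    hasDerivAt_inv_sub_div_sq_mul_exp k (by linarith [mem_Ioi.mp hx])
  refine strictMonoOn_of_deriv_pos (convex_Ioi 2)
    (fun x hx => (hderiv x hx).continuousAt.continuousWithinAt) fun x hx => ?_
  rw [interior_Ioi] at hx
  have hx2 : 2 < x := hx
  rw [(hderiv x hx).deriv]
  have hnum : 0 < (x - 2) * (x - k) + x := by nlinarith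
  positivity

lemma sq_mul_exp_sub_add_eq_self_iff (k r : ℝ) {x : ℝ} (hx : x ≠ 0) :
    x ^ 2 * exp (r - x) + k = x ↔ exp r = (1 / x - k / x ^ 2) * exp x := by
  rw [exp_sub]
  field_simp
  constructor <;> intro h <;> linarith

theorem chialvo_fixed_point_moves_right_general (k : ℝ) (hk2 : k < 2) :
    (∀ r₁ r₂ x₁ x₂ : ℝ, r₁ < r₂ → 2 < x₁ → 2 < x₂ →
      x₁ ^ 2 * Real.exp (r₁ - x₁) + k = x₁ →
      x₂ ^ 2 * Real.exp (r₂ - x₂) + k = x₂ → x₁ < x₂) ∧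
    StrictMonoOn (fun x : ℝ => (1 / x - k / x ^ 2) * Real.exp x) (Set.Ioi 2) ∧
    (∀ r x : ℝ, 2 < x →
      (x ^ 2 * Real.exp (r - x) + k = x ↔
        Real.exp r = (1 / x - k / x ^ 2) * Real.exp x)) := by
  have hmono := strictMonoOn_inv_sub_div_sq_mul_exp hk2.le
  have hfix : ∀ r x : ℝ, 2 < x → (x ^ 2 * exp (r - x) + k = x ↔
      exp r = (1 / x - k / x ^ 2) * exp x) := fun r x hx =>
    sq_mul_exp_sub_add_eq_self_iff k r (by linarith)
  refine ⟨fun r₁ r₂ x₁ x₂ hr hx₁ hx₂ h₁ h₂ => ?_, hmono, hfix⟩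
  rw [← hmono.lt_iff_lt hx₁ hx₂, ← (hfix r₁ x₁ hx₁).mp h₁, ← (hfix r₂ x₂ hx₂).mp h₂]
  exact exp_lt_exp.mpr hr

/-- Monotone motion of the right fixed point of the 1D Chialvo map. Fix `0 ≤ k < 2`.
If `r₁ < r₂`, `x₁ > 2` is a fixed point of `f_{r₁,k}` and `x₂ > 2` is a fixed point
of `f_{r₂,k}`, then `x₁ < x₂`. Equivalently: `x ↦ (1/x − k/x²) exp(x)` is strictly
increasing on `(2, ∞)`, and `x > 2` is a fixed point of `f_{r,k}` exactly when
`exp(r) = (1/x − k/x²) exp(x)`. -/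
theorem chialvo_fixed_point_moves_right (k : ℝ) (hk0 : 0 ≤ k) (hk2 : k < 2) :
    (∀ r₁ r₂ x₁ x₂ : ℝ, r₁ < r₂ → 2 < x₁ → 2 < x₂ →
      x₁ ^ 2 * Real.exp (r₁ - x₁) + k = x₁ →
      x₂ ^ 2 * Real.exp (r₂ - x₂) + k = x₂ → x₁ < x₂) ∧
    StrictMonoOn (fun x : ℝ => (1 / x - k / x ^ 2) * Real.exp x) (Set.Ioi 2) ∧
    (∀ r x : ℝ, 2 < x →
      (x ^ 2 * Real.exp (r - x) + k = x ↔
        Real.exp r = (1 / x - k / x ^ 2) * Real.exp x)) :=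
  chialvo_fixed_point_moves_right_general k hk2
end

section
/- Let k ≥ 0 and r ∈ ℝ and suppose the Chialvo map f = f_{r,k}, f(x) = x²·exp(r − x) + k, satisfies f²(2) < f³(2) < 2 < f(2). Then: (a) f has a fixed point z with 2 < z < f(2); and (b) the second iterate f² is turbulent on [f²(2), f(2)]: there exist nonempty closed intervals J and K contained in [f²(2), f(2)], each with nonempty interior and with disjoint interiors, such that J ∪ K ⊆ f²(J) and J ∪ K ⊆ f²(K). Explicitly, one may take J = [f²(2), 2] and K = [2, z]. -/
/-!
The fixed point `z` comes from the intermediate value theorem applied to `x ↦ f x - x` on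
`[2, f(2)]`. On `J = [f²(2), 2]` there is a point `p` with `f p = 2`, so `f²` maps the endpoints
of `[p, 2]` to `f(2)` and `f²(2)`, and `f²(J) ⊇ [f²(2), f(2)] ⊇ J ∪ K`. On `K = [2, z]`, `f²`
sends the endpoints to `f²(2)` and `z`, so `f²(K) ⊇ [f²(2), z] = J ∪ K`.
-/

open Set Function

section IntermediateValue

variable {α : Type*} [ConditionallyCompleteLinearOrder α] [TopologicalSpace α] [OrderTopology α]
  [DenselyOrdered α]

theorem exists_mem_Ioo_isFixedPt {a b : α} {f : α → α} (hf : ContinuousOn f (Icc a b))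
    (hle : a ≤ b) (ha : a < f a) (hb : f b < b) : ∃ c ∈ Ioo a b, IsFixedPt f c := by
  obtain ⟨c, ⟨hac, hcb⟩, hfix⟩ := exists_mem_Icc_isFixedPt hf hle ha.le hb.le
  refine ⟨c, ⟨hac.lt_of_ne ?_, hcb.lt_of_ne ?_⟩, hfix⟩
  · rintro rfl
    exact ha.ne' hfix
  · rintro rfl
    exact hb.ne hfix

theorem Icc_subset_image_comp_self_Icc {f : α → α} (hf : Continuous f) {c : α}
    (hc : c ≤ f c) (hf2 : f (f c) ≤ c) (hf3 : f (f (f c)) ≤ c) :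
    Icc (f (f c)) (f c) ⊆ (f ∘ f) '' Icc (f (f c)) c := by
  obtain ⟨p, ⟨hp₁, hp₂⟩, hfp⟩ : c ∈ f '' Icc (f (f c)) c :=
    intermediate_value_Icc hf2 hf.continuousOn ⟨hf3, hc⟩
  have hpre := intermediate_value_Icc' hp₂ (hf.comp hf).continuousOn
  rw [comp_apply, comp_apply, hfp] at hpre
  exact hpre.trans (image_mono (Icc_subset_Icc_left hp₁))

theorem Icc_subset_image_Icc_of_isFixedPt {g : α → α} (hg : Continuous g) {c z : α}
    (hcz : c ≤ z) (hz : IsFixedPt g z) : Icc (g c) z ⊆ g '' Icc c z := by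
  simpa only [hz.eq] using intermediate_value_Icc hcz hg.continuousOn

end IntermediateValue

theorem chialvo_second_iterate_turbulent_general (k r : ℝ)
    (f : ℝ → ℝ) (hf : f = fun x : ℝ => x ^ 2 * Real.exp (r - x) + k)
    (h1 : f (f 2) < f (f (f 2))) (h2 : f (f (f 2)) < 2) (h3 : 2 < f 2) :
    ∃ z : ℝ, 2 < z ∧ z < f 2 ∧ f z = z ∧
      Set.Icc (f (f 2)) 2 ⊆ Set.Icc (f (f 2)) (f 2) ∧
      Set.Icc 2 z ⊆ Set.Icc (f (f 2)) (f 2) ∧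
      (interior (Set.Icc (f (f 2)) 2)).Nonempty ∧
      (interior (Set.Icc 2 z)).Nonempty ∧
      Disjoint (interior (Set.Icc (f (f 2)) 2)) (interior (Set.Icc 2 z)) ∧
      Set.Icc (f (f 2)) 2 ∪ Set.Icc 2 z ⊆ (f ∘ f) '' Set.Icc (f (f 2)) 2 ∧
      Set.Icc (f (f 2)) 2 ∪ Set.Icc 2 z ⊆ (f ∘ f) '' Set.Icc 2 z := by
  have hc : Continuous f := hf ▸ by fun_prop
  have hf2 : f (f 2) < 2 := h1.trans h2
  obtain ⟨z, ⟨hz₁, hz₂⟩, hfix⟩ :=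
    exists_mem_Ioo_isFixedPt hc.continuousOn h3.le h3 (by linarith : f (f 2) < f 2)
  have hJK : Icc (f (f 2)) 2 ∪ Icc 2 z = Icc (f (f 2)) z := Icc_union_Icc_eq_Icc hf2.le hz₁.le
  refine ⟨z, hz₁, hz₂, hfix, Icc_subset_Icc_right h3.le, Icc_subset_Icc hf2.le hz₂.le,
    by simpa using hf2, by simpa using hz₁, ?_, ?_, ?_⟩
  · rw [interior_Icc, interior_Icc]
    exact Ioo_disjoint_Ioo.2 (by simp)
  · rw [hJK]
    exact (Icc_subset_Icc_right hz₂.le).trans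
      (Icc_subset_image_comp_self_Icc hc h3.le hf2.le h2.le)
  · rw [hJK]
    exact Icc_subset_image_Icc_of_isFixedPt (hc.comp hc) hz₁.le (hfix.comp hfix)

/-- Turbulence of the second iterate of the 1D Chialvo map. Let `k ≥ 0`, `r ∈ ℝ`
and `f = f_{r,k}`, `f(x) = x² exp(r − x) + k`, satisfy `f²(2) < f³(2) < 2 < f(2)`.
Then (a) `f` has a fixed point `z` with `2 < z < f(2)`, and (b) taking
`J = [f²(2), 2]` and `K = [2, z]`, which are nonempty closed intervals contained
in `[f²(2), f(2)]` with nonempty disjoint interiors, one has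
`J ∪ K ⊆ f²(J)` and `J ∪ K ⊆ f²(K)`. -/
theorem chialvo_second_iterate_turbulent (k r : ℝ) (hk : 0 ≤ k)
    (f : ℝ → ℝ) (hf : f = fun x : ℝ => x ^ 2 * Real.exp (r - x) + k)
    (h1 : f (f 2) < f (f (f 2))) (h2 : f (f (f 2)) < 2) (h3 : 2 < f 2) :
    ∃ z : ℝ, 2 < z ∧ z < f 2 ∧ f z = z ∧
      Set.Icc (f (f 2)) 2 ⊆ Set.Icc (f (f 2)) (f 2) ∧
      Set.Icc 2 z ⊆ Set.Icc (f (f 2)) (f 2) ∧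
      (interior (Set.Icc (f (f 2)) 2)).Nonempty ∧
      (interior (Set.Icc 2 z)).Nonempty ∧
      Disjoint (interior (Set.Icc (f (f 2)) 2)) (interior (Set.Icc 2 z)) ∧
      Set.Icc (f (f 2)) 2 ∪ Set.Icc 2 z ⊆ (f ∘ f) '' Set.Icc (f (f 2)) 2 ∧
      Set.Icc (f (f 2)) 2 ∪ Set.Icc 2 z ⊆ (f ∘ f) '' Set.Icc 2 z :=
  chialvo_second_iterate_turbulent_general k r f hf h1 h2 h3
end

section
/- Let k ≥ 0 and r ∈ ℝ and suppose the Chialvo map f = f_{r,k}, f(x) = x²·exp(r − x) + k, satisfies f²(2) < f³(2) < 2 < f(2). Then f is chaotic in the sense of Block and Coppel on the interval I = [f²(2), f(2)]: there exist m ∈ ℕ, m ≥ 1, and a nonempty compact set Y ⊆ I with f^m(Y) ⊆ Y, together with a continuous surjection h : Y → ({0,1}^ℕ) (the sequence space on two symbols with the product topology, equivalently with the metric d(α, β) = Σ_{i≥0} |a_i − b_i|/2^i) such that h(f^m(y)) = σ(h(y)) for all y ∈ Y, where σ is the shift map σ(a)(n) = a(n+1). -/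
open Set Function Topology

/-!
Write `c = 2`. Since `f (f c) < c < f c`, there is `p ∈ (c, f c)` with `f p = c`, and further
`c ≤ u ≤ v < w ≤ p` with `f (f u) = c`, `f (f v) = p` and `f^[4] w = p`. Then `f^[4]` sends the
endpoints of `[u, v]` to `f (f c)` and `f c`, and those of `[w, p]` to `p` and `f (f (f c))`, so
each of these two disjoint intervals is mapped by `f^[4]` over `[u, p]`, which contains both.
Such a horseshoe yields the semiconjugacy: the points whose `f^[4]`-orbit stays in the two
intervals form a compact invariant set, on which the itinerary map is continuous, onto the
sequence space by a nested compact sets argument, and intertwines `f^[4]` with the shift.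
-/

section Horseshoe

variable {X : Type*} {g : X → X} {J : Bool → Set X}

def trappedSet (g : X → X) (S : Set X) : Set X :=
  ⋂ n, g^[n] ⁻¹' S

open Classical in
noncomputable def itinerary (g : X → X) (A : Set X) (x : X) (n : ℕ) : Bool :=
  decide (g^[n] x ∈ A)

theorem trappedSet_subset (S : Set X) : trappedSet g S ⊆ S :=
  fun _ hx => mem_iInter.1 hx 0

theorem mapsTo_trappedSet (S : Set X) : MapsTo g (trappedSet g S) (trappedSet g S) :=
  fun _ hx => mem_iInter.2 fun n => by
    simpa only [mem_preimage, ← iterate_succ_apply] using mem_iInter.1 hx (n + 1)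

theorem itinerary_apply_self (A : Set X) (x : X) :
    itinerary g A (g x) = fun n => itinerary g A x (n + 1) :=
  rfl

theorem itinerary_eq_of_iterate_mem (hdisj : Disjoint (J false) (J true)) {x : X} {n : ℕ}
    {i : Bool} (hx : g^[n] x ∈ J i) : itinerary g (J true) x n = i := by
  cases i
  · simpa [itinerary] using hdisj.notMem_of_mem_left hx
  · simpa [itinerary] using hx

theorem exists_forall_le_iterate_mem (hJne : ∀ i, (J i).Nonempty)
    (hcov : ∀ i j, J j ⊆ g '' J i) (N : ℕ) (s : ℕ → Bool) :
    ∃ x, ∀ n ≤ N, g^[n] x ∈ J (s n) := by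
  induction N generalizing s with
  | zero =>
    obtain ⟨x, hx⟩ := hJne (s 0)
    exact ⟨x, fun n hn => by rwa [Nat.le_zero.1 hn]⟩
  | succ N ih =>
    obtain ⟨y, hy⟩ := ih fun n => s (n + 1)
    obtain ⟨x, hx, rfl⟩ := hcov (s 0) (s 1) (hy 0 N.zero_le)
    refine ⟨x, fun n hn => ?_⟩
    cases n with
    | zero => exact hx
    | succ n => simpa only [iterate_succ_apply] using hy n (Nat.succ_le_succ_iff.1 hn)

variable [TopologicalSpace X]

theorem isClosed_trappedSet (hg : Continuous g) {S : Set X} (hS : IsClosed S) :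
    IsClosed (trappedSet g S) :=
  isClosed_iInter fun n => hS.preimage (hg.iterate n)

theorem isCompact_trappedSet [T2Space X] (hg : Continuous g) {S : Set X} (hS : IsCompact S) :
    IsCompact (trappedSet g S) :=
  hS.of_isClosed_subset (isClosed_trappedSet hg hS.isClosed) (trappedSet_subset S)

theorem continuousOn_itinerary (hg : Continuous g) (hJ : ∀ i, IsClosed (J i))
    (hdisj : Disjoint (J false) (J true)) :
    ContinuousOn (itinerary g (J true)) (trappedSet g (⋃ i, J i)) := by
  refine continuousOn_pi.2 fun n y hy => ?_
  obtain ⟨i, hi⟩ := mem_iUnion.1 (mem_iInter.1 hy n)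
  have hdisj' : Disjoint (J i) (J !i) := by cases i <;> simp [hdisj, hdisj.symm]
  -- Near `y`, the orbit point `g^[n] z` avoids the closed set `J !i`, hence lies in `J i`.
  have hnear : ∀ᶠ z in 𝓝[trappedSet g (⋃ i, J i)] y, itinerary g (J true) z n = i := by
    have hopen : g^[n] ⁻¹' (J !i)ᶜ ∈ 𝓝 y :=
      ((hJ _).isOpen_compl.preimage (hg.iterate n)).mem_nhds (hdisj'.notMem_of_mem_left hi)
    filter_upwards [nhdsWithin_le_nhds hopen, self_mem_nhdsWithin] with z hz hzY
    obtain ⟨j, hj⟩ := mem_iUnion.1 (mem_iInter.1 hzY n)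
    obtain rfl : j = i := by
      cases i <;> cases j <;> first | rfl | exact absurd hj hz
    exact itinerary_eq_of_iterate_mem hdisj hj
  exact continuousWithinAt_const.congr_of_eventuallyEq hnear
    (itinerary_eq_of_iterate_mem hdisj hi)

theorem exists_forall_iterate_mem [T2Space X] (hg : Continuous g) (hJc : ∀ i, IsCompact (J i))
    (hJne : ∀ i, (J i).Nonempty) (hcov : ∀ i j, J j ⊆ g '' J i) (s : ℕ → Bool) :
    ∃ x, ∀ n, g^[n] x ∈ J (s n) := by
  set K : ℕ → Set X := fun N => ⋂ n ≤ N, g^[n] ⁻¹' J (s n)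
  have hKclosed : ∀ N, IsClosed (K N) := fun N =>
    isClosed_biInter fun n _ => (hJc (s n)).isClosed.preimage (hg.iterate n)
  have hK0 : IsCompact (K 0) :=
    (hJc (s 0)).of_isClosed_subset (hKclosed 0) fun x hx => mem_iInter₂.1 hx 0 le_rfl
  obtain ⟨x, hx⟩ := IsCompact.nonempty_iInter_of_sequence_nonempty_isCompact_isClosed K
    (fun N _ hx => mem_iInter₂.2 fun n hn => mem_iInter₂.1 hx n (hn.trans N.le_succ))
    (fun N => by simpa [K] using exists_forall_le_iterate_mem hJne hcov N s) hK0 hKclosed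
  exact ⟨x, fun n => mem_iInter₂.1 (mem_iInter.1 hx n) n le_rfl⟩

theorem surjOn_itinerary [T2Space X] (hg : Continuous g) (hJc : ∀ i, IsCompact (J i))
    (hJne : ∀ i, (J i).Nonempty) (hdisj : Disjoint (J false) (J true))
    (hcov : ∀ i j, J j ⊆ g '' J i) :
    SurjOn (itinerary g (J true)) (trappedSet g (⋃ i, J i)) univ := fun s _ => by
  obtain ⟨x, hx⟩ := exists_forall_iterate_mem hg hJc hJne hcov s
  exact ⟨x, mem_iInter.2 fun n => mem_iUnion.2 ⟨s n, hx n⟩,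
    funext fun n => itinerary_eq_of_iterate_mem hdisj (hx n)⟩

end Horseshoe

theorem exists_iterate_four_horseshoe {f : ℝ → ℝ} (hf : Continuous f) {c : ℝ}
    (h1 : c < f c) (h2 : f (f c) < c) (h3 : f (f (f c)) < c) :
    ∃ u v w p, c ≤ u ∧ u ≤ v ∧ v < w ∧ w ≤ p ∧ p < f c ∧
      Icc u p ⊆ f^[4] '' Icc u v ∧ Icc u p ⊆ f^[4] '' Icc w p := by
  have hf2 : Continuous fun x => f (f x) := hf.comp hf
  have hf4 : Continuous f^[4] := hf.iterate 4
  obtain ⟨p, ⟨hcp, hpc⟩, hp⟩ := intermediate_value_Icc' h1.le hf.continuousOn ⟨h2.le, h1.le⟩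
  have hcp : c < p := hcp.lt_of_ne (by rintro rfl; exact h1.ne' hp)
  have hpc : p < f c := hpc.lt_of_ne (by rintro rfl; exact h2.ne hp)
  obtain ⟨u, ⟨hcu, hup⟩, hu : f (f u) = c⟩ := intermediate_value_Icc hcp.le hf2.continuousOn
    (show c ∈ Icc (f (f c)) (f (f p)) by rw [hp]; exact ⟨h2.le, h1.le⟩)
  obtain ⟨v, ⟨huv, hvp⟩, hv : f (f v) = p⟩ := intermediate_value_Icc hup hf2.continuousOn
    (show p ∈ Icc (f (f u)) (f (f p)) by rw [hu, hp]; exact ⟨hcp.le, hpc.le⟩)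
  have h4u : f^[4] u = f (f c) := show f (f (f (f u))) = _ by rw [hu]
  have h4v : f^[4] v = f c := show f (f (f (f v))) = _ by rw [hv, hp]
  have h4p : f^[4] p = f (f (f c)) := show f (f (f (f p))) = _ by rw [hp]
  obtain ⟨w, ⟨hvw, hwp⟩, hw⟩ := intermediate_value_Icc' hvp hf4.continuousOn
    (show p ∈ Icc (f^[4] p) (f^[4] v) by rw [h4p, h4v]; exact ⟨(h3.trans hcp).le, hpc.le⟩)
  have hvw : v < w := hvw.lt_of_ne (by rintro rfl; exact hpc.ne' (h4v.symm.trans hw))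
  refine ⟨u, v, w, p, hcu, huv, hvw, hwp, hpc, fun x hx => ?_, fun x hx => ?_⟩
  · exact intermediate_value_Icc huv hf4.continuousOn
      (by rw [h4u, h4v]; exact ⟨h2.le.trans (hcu.trans hx.1), hx.2.trans hpc.le⟩)
  · exact intermediate_value_Icc' hwp hf4.continuousOn
      (by rw [h4p, hw]; exact ⟨h3.le.trans (hcu.trans hx.1), hx.2⟩)

theorem chialvo_block_coppel_chaos_general (k r : ℝ)
    (f : ℝ → ℝ) (hf : f = fun x : ℝ => x ^ 2 * Real.exp (r - x) + k)
    (h1 : f (f 2) < f (f (f 2))) (h2 : f (f (f 2)) < 2) (h3 : 2 < f 2) :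
    ∃ m : ℕ, 1 ≤ m ∧ ∃ Y : Set ℝ, Y.Nonempty ∧ IsCompact Y ∧
      Y ⊆ Set.Icc (f (f 2)) (f 2) ∧ (∀ y ∈ Y, f^[m] y ∈ Y) ∧
      ∃ h : ℝ → (ℕ → Bool), ContinuousOn h Y ∧
        (∀ s : ℕ → Bool, ∃ y ∈ Y, h y = s) ∧
        (∀ y ∈ Y, h (f^[m] y) = fun n => h y (n + 1)) := by
  have hfc : Continuous f := hf ▸ by fun_prop
  obtain ⟨u, v, w, p, h2u, huv, hvw, hwp, hpf, hcovL, hcovR⟩ :=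
    exists_iterate_four_horseshoe hfc h3 (h1.trans h2) h2
  set J : Bool → Set ℝ := fun i => cond i (Icc w p) (Icc u v)
  have hJsub : ∀ i, J i ⊆ Icc u p := by
    rintro (_ | _)
    exacts [Icc_subset_Icc_right (hvw.le.trans hwp), Icc_subset_Icc_left (huv.trans hvw.le)]
  have hJc : ∀ i, IsCompact (J i) := by rintro (_ | _) <;> exact isCompact_Icc
  have hJne : ∀ i, (J i).Nonempty := by rintro (_ | _) <;> exact nonempty_Icc.2 ‹_›
  have hdisj : Disjoint (J false) (J true) :=
    disjoint_left.2 fun _ hx hx' => absurd hx'.1 (not_le.2 (hx.2.trans_lt hvw))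
  have hcov : ∀ i j, J j ⊆ f^[4] '' J i := by
    rintro (_ | _) j
    exacts [(hJsub j).trans hcovL, (hJsub j).trans hcovR]
  have hg : Continuous f^[4] := hfc.iterate 4
  have hsurj := surjOn_itinerary hg hJc hJne hdisj hcov
  obtain ⟨y, hy, -⟩ := hsurj (mem_univ fun _ => false)
  refine ⟨4, by norm_num, _, ⟨y, hy⟩, isCompact_trappedSet hg (isCompact_iUnion hJc),
    fun x hx => ?_, mapsTo_trappedSet _, itinerary f^[4] (J true),
    continuousOn_itinerary hg (fun i => (hJc i).isClosed) hdisj,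
    fun s => hsurj (mem_univ s), fun x _ => itinerary_apply_self _ x⟩
  obtain ⟨i, hi⟩ := mem_iUnion.1 (trappedSet_subset _ hx)
  obtain ⟨hux, hxp⟩ := hJsub i hi
  exact ⟨(h1.trans h2).le.trans (h2u.trans hux), hxp.trans hpf.le⟩

/-- Block–Coppel chaos for the 1D Chialvo map. Let `k ≥ 0`, `r ∈ ℝ` and
`f = f_{r,k}`, `f(x) = x² exp(r − x) + k`, satisfy `f²(2) < f³(2) < 2 < f(2)`.
Then `f` is chaotic in the sense of Block and Coppel on `I = [f²(2), f(2)]`: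
there exist `m ≥ 1` and a nonempty compact `Y ⊆ I` invariant under `f^m`,
together with a continuous surjection `h` from `Y` onto the two-symbol sequence
space `ℕ → Bool` (with the product topology) semi-conjugating `f^m` to the shift. -/
theorem chialvo_block_coppel_chaos (k r : ℝ) (hk : 0 ≤ k)
    (f : ℝ → ℝ) (hf : f = fun x : ℝ => x ^ 2 * Real.exp (r - x) + k)
    (h1 : f (f 2) < f (f (f 2))) (h2 : f (f (f 2)) < 2) (h3 : 2 < f 2) :
    ∃ m : ℕ, 1 ≤ m ∧ ∃ Y : Set ℝ, Y.Nonempty ∧ IsCompact Y ∧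
      Y ⊆ Set.Icc (f (f 2)) (f 2) ∧ (∀ y ∈ Y, f^[m] y ∈ Y) ∧
      ∃ h : ℝ → (ℕ → Bool), ContinuousOn h Y ∧
        (∀ s : ℕ → Bool, ∃ y ∈ Y, h y = s) ∧
        (∀ y ∈ Y, h (f^[m] y) = fun n => h y (n + 1)) :=
  chialvo_block_coppel_chaos_general k r f hf h1 h2 h3
end
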